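/- Assume δ is unramified, i.e. δ(u) = 0 for all u ∈ ℤ_pˣ. Let pr : Ind_P^G ε_δ → Ind_P^G χ be the map sending f to the function g ↦ f(g)₂. Then pr admits a K-equivariant k-linear section: there is a k-linear map s : Ind_P^G χ → Ind_P^G ε_δ with pr ∘ s = id and s(u·h) = u·s(h) for all u ∈ K and h ∈ Ind_P^G χ, where groups act by right translation (u·f)(g) = f(g·u). (The easy direction of Proposition 2.2 of the paper: the extension splits when restricted to K.) -/

import Mathlib

open Matrix

/-- membership in `K_n = {g ∈ GL₂(ℤ_p) : g ≡ 1 (mod pⁿ)}`. -/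
def InKn (p : ℕ) [Fact p.Prime] (n : ℕ) (u : GL (Fin 2) ℚ_[p]) : Prop :=
  ∀ i j, ‖(u : Matrix (Fin 2) (Fin 2) ℚ_[p]) i j
            - (1 : Matrix (Fin 2) (Fin 2) ℚ_[p]) i j‖ ≤ (p : ℝ) ^ (-(n : ℤ))

/-- membership in `K = GL₂(ℤ_p)`: entries in `ℤ_p` and determinant a unit. -/
def InK (p : ℕ) [Fact p.Prime] (u : GL (Fin 2) ℚ_[p]) : Prop :=
  (∀ i j, ‖(u : Matrix (Fin 2) (Fin 2) ℚ_[p]) i j‖ ≤ 1) ∧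
  ‖Matrix.det (u : Matrix (Fin 2) (Fin 2) ℚ_[p])‖ = 1

/-- membership in the principal series `Ind_P^G χ`. -/
def IsIndChi (p : ℕ) [Fact p.Prime] {k : Type*} [Field k]
    (χ₁ χ₂ : ℚ_[p]ˣ →* kˣ) (h : GL (Fin 2) ℚ_[p] → k) : Prop :=
  (∀ b g : GL (Fin 2) ℚ_[p],
    (b : Matrix (Fin 2) (Fin 2) ℚ_[p]) 1 0 = 0 →
    ∀ a d : ℚ_[p]ˣ,
      (b : Matrix (Fin 2) (Fin 2) ℚ_[p]) 0 0 = (a : ℚ_[p]) →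
      (b : Matrix (Fin 2) (Fin 2) ℚ_[p]) 1 1 = (d : ℚ_[p]) →
      h (b * g) = (χ₁ a : k) * (χ₂ d : k) * h g) ∧
  (∃ n : ℕ, 1 ≤ n ∧ ∀ g u, InKn p n u → h (g * u) = h g)

/-- membership in `Ind_P^G ε_δ`. -/
def IsIndEps (p : ℕ) [Fact p.Prime] {k : Type*} [Field k]
    (χ₁ χ₂ : ℚ_[p]ˣ →* kˣ) (δ : ℚ_[p]ˣ → k)
    (f : GL (Fin 2) ℚ_[p] → k × k) : Prop :=
  (∀ b g : GL (Fin 2) ℚ_[p],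
    (b : Matrix (Fin 2) (Fin 2) ℚ_[p]) 1 0 = 0 →
    ∀ a d : ℚ_[p]ˣ,
      (b : Matrix (Fin 2) (Fin 2) ℚ_[p]) 0 0 = (a : ℚ_[p]) →
      (b : Matrix (Fin 2) (Fin 2) ℚ_[p]) 1 1 = (d : ℚ_[p]) →
      f (b * g) = ((χ₁ a : k) * (χ₂ d : k) * ((f g).1 + δ (a * d⁻¹) * (f g).2),
                   (χ₁ a : k) * (χ₂ d : k) * (f g).2)) ∧
  (∃ n : ℕ, 1 ≤ n ∧ ∀ g u, InKn p n u → f (g * u) = f g)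

/-!
If `g = b u` with `b` upper triangular with diagonal `(a, d)` and `u ∈ K` (Iwasawa decomposition),
then `‖det g‖ / ‖(g₁₀, g₁₁)‖² = ‖a / d‖`: the bottom row of `g` is `d` times the bottom row of `u`,
which has norm `1` because `K` preserves the sup norm of row vectors. Since `δ` is unramified, it
factors through the norm, so `c g := δ x` for any `x` of norm `‖det g‖ / ‖(g₁₀, g₁₁)‖²` satisfies
`c (b g u) = δ (a / d) + c g`. This is exactly the cocycle relation making
`s h g := (c g · h g, h g)` land in `Ind_P^G ε_δ`, and `s` is visibly linear and `K`-equivariant.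
-/

lemma exists_norm_eq_pi_norm {ι E : Type*} [Fintype ι] [Nonempty ι] [SeminormedAddGroup E]
    (f : ι → E) : ∃ i, ‖f‖ = ‖f i‖ := by
  obtain ⟨i, -, hi⟩ := Finset.univ.exists_mem_eq_sup Finset.univ_nonempty (fun b => ‖f b‖₊)
  exact ⟨i, by rw [Pi.norm_def, hi, coe_nnnorm]⟩

lemma exists_units_norm_eq_pi_norm {F ι : Type*} [NormedField F] [Fintype ι] {v : ι → F}
    (hv : v ≠ 0) : ∃ x : Fˣ, ‖(x : F)‖ = ‖v‖ := by
  obtain ⟨j, -⟩ := Function.ne_iff.1 hv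
  have : Nonempty ι := ⟨j⟩
  obtain ⟨i, hi⟩ := exists_norm_eq_pi_norm v
  exact ⟨Units.mk0 (v i) (norm_ne_zero_iff.1 (hi ▸ norm_ne_zero_iff.2 hv)), hi.symm⟩

lemma Matrix.GeneralLinearGroup.row_ne_zero {F n : Type*} [Field F] [Fintype n] [DecidableEq n]
    (g : GL n F) (i : n) : (g : Matrix n n F) i ≠ 0 := fun h =>
  g.det_ne_zero (det_eq_zero_of_row_eq_zero i fun j => congrFun h j)

lemma map_eq_of_norm_eq_of_unramified {F A : Type*} [NormedField F] [AddMonoid A]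
    {δ : Fˣ → A} (hδ : ∀ x y, δ (x * y) = δ x + δ y)
    (hunram : ∀ u : Fˣ, ‖(u : F)‖ = 1 → δ u = 0) {x y : Fˣ} (h : ‖(x : F)‖ = ‖(y : F)‖) :
    δ x = δ y := by
  have hxy : ‖((x * y⁻¹ : Fˣ) : F)‖ = 1 := by
    rw [Units.val_mul, norm_mul, Units.val_inv_eq_inv_val, norm_inv, h,
      mul_inv_cancel₀ (norm_ne_zero_iff.2 y.ne_zero)]
  rw [← inv_mul_cancel_right x y, hδ, hunram _ hxy, zero_add]

section Iwasawa

variable {F : Type*} [NormedField F]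

noncomputable def bottomRowNormUnit (g : GL (Fin 2) F) : Fˣ :=
  (exists_units_norm_eq_pi_norm (g.row_ne_zero 1)).choose

lemma norm_bottomRowNormUnit (g : GL (Fin 2) F) :
    ‖(bottomRowNormUnit g : F)‖ = ‖(g : Matrix (Fin 2) (Fin 2) F) 1‖ :=
  (exists_units_norm_eq_pi_norm (g.row_ne_zero 1)).choose_spec

noncomputable def iwasawaUnit (g : GL (Fin 2) F) : Fˣ :=
  GeneralLinearGroup.det g / bottomRowNormUnit g ^ 2

lemma norm_iwasawaUnit (g : GL (Fin 2) F) :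
    ‖(iwasawaUnit g : F)‖ =
      ‖(g : Matrix (Fin 2) (Fin 2) F).det‖ / ‖(g : Matrix (Fin 2) (Fin 2) F) 1‖ ^ 2 := by
  rw [iwasawaUnit, Units.val_div_eq_div_val, norm_div, Units.val_pow_eq_pow_val, norm_pow,
    norm_bottomRowNormUnit, GeneralLinearGroup.val_det_apply]

lemma norm_iwasawaUnit_mul_of_apply_one_zero {b : GL (Fin 2) F}
    (hb : (b : Matrix (Fin 2) (Fin 2) F) 1 0 = 0) (g : GL (Fin 2) F) :
    ‖(iwasawaUnit (b * g) : F)‖ =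
      ‖(b : Matrix (Fin 2) (Fin 2) F) 0 0‖ / ‖(b : Matrix (Fin 2) (Fin 2) F) 1 1‖ *
        ‖(iwasawaUnit g : F)‖ := by
  have hrow : ((b * g : GL (Fin 2) F) : Matrix (Fin 2) (Fin 2) F) 1 =
      (b : Matrix (Fin 2) (Fin 2) F) 1 1 • (g : Matrix (Fin 2) (Fin 2) F) 1 := by
    rw [Units.val_mul, mul_apply_eq_vecMul, vecMul_eq_sum, Fin.sum_univ_two, hb, zero_smul,
      zero_add]
  have hdet : ((b * g : GL (Fin 2) F) : Matrix (Fin 2) (Fin 2) F).det =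
      (b : Matrix (Fin 2) (Fin 2) F) 0 0 * (b : Matrix (Fin 2) (Fin 2) F) 1 1 *
        (g : Matrix (Fin 2) (Fin 2) F).det := by
    rw [Units.val_mul, det_mul, det_fin_two (b : Matrix (Fin 2) (Fin 2) F), hb]
    ring
  have hb11 : ‖(b : Matrix (Fin 2) (Fin 2) F) 1 1‖ ≠ 0 := by
    refine norm_ne_zero_iff.2 fun h => b.det_ne_zero ?_
    rw [det_fin_two, hb, h]
    ring
  rw [norm_iwasawaUnit, norm_iwasawaUnit, hrow, hdet, norm_smul, norm_mul, norm_mul]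
  field_simp

end Iwasawa

section Ultrametric

variable {F : Type*} [NormedField F] [IsUltrametricDist F] {n : Type*} [Fintype n]

lemma norm_det_le_one [DecidableEq n] {M : Matrix n n F} (hM : ∀ i j, ‖M i j‖ ≤ 1) :
    ‖M.det‖ ≤ 1 := by
  rw [det_apply']
  refine IsUltrametricDist.norm_sum_le_of_forall_le_of_nonneg zero_le_one fun σ _ => ?_
  rw [norm_mul, norm_prod]
  refine mul_le_one₀ ?_ (Finset.prod_nonneg fun _ _ => norm_nonneg _)
    (Finset.prod_le_one (fun _ _ => norm_nonneg _) fun i _ => hM _ _)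
  rcases Int.units_eq_one_or (Equiv.Perm.sign σ) with h | h <;> simp [h]

lemma norm_adjugate_apply_le_one [DecidableEq n] {M : Matrix n n F} (hM : ∀ i j, ‖M i j‖ ≤ 1)
    (i j : n) : ‖M.adjugate i j‖ ≤ 1 := by
  rw [adjugate_apply]
  refine norm_det_le_one fun k l => ?_
  rcases eq_or_ne k j with rfl | hk
  · rw [updateRow_self]
    rcases eq_or_ne l i with rfl | hl <;> simp [*]
  · rw [updateRow_ne hk]; exact hM k l

lemma norm_inv_apply_le_one [DecidableEq n] {M : Matrix n n F} (hM : ∀ i j, ‖M i j‖ ≤ 1)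
    (hdet : ‖M.det‖ = 1) (i j : n) : ‖M⁻¹ i j‖ ≤ 1 := by
  rw [inv_def, Ring.inverse_eq_inv', Matrix.smul_apply, smul_eq_mul, norm_mul, norm_inv, hdet,
    inv_one, one_mul]
  exact norm_adjugate_apply_le_one hM i j

lemma norm_vecMul_le (v : n → F) {M : Matrix n n F} (hM : ∀ i j, ‖M i j‖ ≤ 1) :
    ‖v ᵥ* M‖ ≤ ‖v‖ :=
  (pi_norm_le_iff_of_nonneg (norm_nonneg v)).2 fun j =>
    IsUltrametricDist.norm_sum_le_of_forall_le_of_nonneg (norm_nonneg v) fun i _ => by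
      rw [norm_mul]
      exact (mul_le_of_le_one_right (norm_nonneg _) (hM i j)).trans (norm_le_pi_norm v i)

lemma norm_vecMul_eq [DecidableEq n] (v : n → F) {M : Matrix n n F} (hM : ∀ i j, ‖M i j‖ ≤ 1)
    (hdet : ‖M.det‖ = 1) : ‖v ᵥ* M‖ = ‖v‖ := by
  refine le_antisymm (norm_vecMul_le v hM) ?_
  have hunit : IsUnit M.det := isUnit_iff_ne_zero.2 (norm_ne_zero_iff.1 (hdet ▸ one_ne_zero))
  calc ‖v‖ = ‖v ᵥ* M ᵥ* M⁻¹‖ := by rw [vecMul_vecMul, mul_nonsing_inv M hunit, vecMul_one]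
    _ ≤ ‖v ᵥ* M‖ := norm_vecMul_le _ (norm_inv_apply_le_one hM hdet)

lemma norm_eq_one_of_norm_sub_one_lt_one {x : F} (hx : ‖x - 1‖ < 1) : ‖x‖ = 1 := by
  have h := IsUltrametricDist.norm_add_eq_max_of_norm_ne_norm (x := x - 1) (y := 1)
    (by rw [norm_one]; exact hx.ne)
  rwa [sub_add_cancel, norm_one, max_eq_right hx.le] at h

lemma norm_le_one_of_norm_sub_le_one {x y : F} (hxy : ‖x - y‖ ≤ 1) (hy : ‖y‖ ≤ 1) : ‖x‖ ≤ 1 := by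
  simpa using (IsUltrametricDist.norm_add_le_max (x - y) y).trans (max_le hxy hy)

lemma norm_det_fin_two_eq_one {u : Matrix (Fin 2) (Fin 2) F}
    (hu : ∀ i j, ‖u i j - (1 : Matrix (Fin 2) (Fin 2) F) i j‖ < 1) : ‖u.det‖ = 1 := by
  have h00 : ‖u 0 0 * u 1 1‖ = 1 := by
    rw [norm_mul, norm_eq_one_of_norm_sub_one_lt_one (by simpa using hu 0 0),
      norm_eq_one_of_norm_sub_one_lt_one (by simpa using hu 1 1), one_mul]
  have h01 : ‖-(u 0 1 * u 1 0)‖ < 1 := by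
    rw [norm_neg, norm_mul]
    exact mul_lt_one_of_nonneg_of_lt_one_left (norm_nonneg _) (by simpa using hu 0 1)
      (by simpa using (hu 1 0).le)
  rw [det_fin_two, sub_eq_add_neg,
    IsUltrametricDist.norm_add_eq_max_of_norm_ne_norm (by rw [h00]; exact h01.ne'), h00,
    max_eq_left h01.le]

lemma norm_iwasawaUnit_mul_of_norm_le_one (g : GL (Fin 2) F) {u : GL (Fin 2) F}
    (hu : ∀ i j, ‖(u : Matrix (Fin 2) (Fin 2) F) i j‖ ≤ 1)
    (hdet : ‖(u : Matrix (Fin 2) (Fin 2) F).det‖ = 1) :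
    ‖(iwasawaUnit (g * u) : F)‖ = ‖(iwasawaUnit g : F)‖ := by
  rw [norm_iwasawaUnit, norm_iwasawaUnit, Units.val_mul, det_mul, norm_mul, hdet, mul_one,
    mul_apply_eq_vecMul, norm_vecMul_eq _ hu hdet]

end Ultrametric

section PAdic

variable {p : ℕ} [Fact p.Prime]

lemma InKn.inK {n : ℕ} (hn : 1 ≤ n) {u : GL (Fin 2) ℚ_[p]} (hu : InKn p n u) : InK p u := by
  have hp : (p : ℝ) ^ (-(n : ℤ)) < 1 :=
    zpow_lt_one_of_neg₀ (Nat.one_lt_cast.2 (Fact.out : p.Prime).one_lt) (by omega)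
  have hlt : ∀ i j, ‖(u : Matrix (Fin 2) (Fin 2) ℚ_[p]) i j -
      (1 : Matrix (Fin 2) (Fin 2) ℚ_[p]) i j‖ < 1 := fun i j => (hu i j).trans_lt hp
  refine ⟨fun i j => norm_le_one_of_norm_sub_le_one (hlt i j).le ?_, norm_det_fin_two_eq_one hlt⟩
  rw [one_apply]
  split_ifs <;> simp

variable {k : Type*} [Field k] {δ : ℚ_[p]ˣ → k}

lemma map_iwasawaUnit_mul_of_inK (hδ : ∀ x y, δ (x * y) = δ x + δ y)
    (hunram : ∀ u : ℚ_[p]ˣ, ‖(u : ℚ_[p])‖ = 1 → δ u = 0) (g : GL (Fin 2) ℚ_[p])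
    {u : GL (Fin 2) ℚ_[p]} (hu : InK p u) :
    δ (iwasawaUnit (g * u)) = δ (iwasawaUnit g) :=
  map_eq_of_norm_eq_of_unramified hδ hunram (norm_iwasawaUnit_mul_of_norm_le_one g hu.1 hu.2)

lemma map_iwasawaUnit_upper_mul (hδ : ∀ x y, δ (x * y) = δ x + δ y)
    (hunram : ∀ u : ℚ_[p]ˣ, ‖(u : ℚ_[p])‖ = 1 → δ u = 0) {b : GL (Fin 2) ℚ_[p]}
    (hb : (b : Matrix (Fin 2) (Fin 2) ℚ_[p]) 1 0 = 0) {a d : ℚ_[p]ˣ}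
    (ha : (b : Matrix (Fin 2) (Fin 2) ℚ_[p]) 0 0 = a)
    (hd : (b : Matrix (Fin 2) (Fin 2) ℚ_[p]) 1 1 = d) (g : GL (Fin 2) ℚ_[p]) :
    δ (iwasawaUnit (b * g)) = δ (iwasawaUnit g) + δ (a * d⁻¹) := by
  rw [← hδ]
  refine map_eq_of_norm_eq_of_unramified hδ hunram ?_
  rw [norm_iwasawaUnit_mul_of_apply_one_zero hb, ha, hd, Units.val_mul, Units.val_mul, norm_mul,
    norm_mul, Units.val_inv_eq_inv_val, norm_inv, div_eq_mul_inv, mul_comm]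

noncomputable def iwasawaSection (δ : ℚ_[p]ˣ → k) (h : GL (Fin 2) ℚ_[p] → k)
    (g : GL (Fin 2) ℚ_[p]) : k × k :=
  (δ (iwasawaUnit g) * h g, h g)

lemma isIndEps_iwasawaSection {χ₁ χ₂ : ℚ_[p]ˣ →* kˣ} (hδ : ∀ x y, δ (x * y) = δ x + δ y)
    (hunram : ∀ u : ℚ_[p]ˣ, ‖(u : ℚ_[p])‖ = 1 → δ u = 0) {h : GL (Fin 2) ℚ_[p] → k}
    (hh : IsIndChi p χ₁ χ₂ h) : IsIndEps p χ₁ χ₂ δ (iwasawaSection δ h) := by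
  obtain ⟨hP, n, hn, hKn⟩ := hh
  refine ⟨fun b g hb a d ha hd => ?_, n, hn, fun g u hu => ?_⟩
  · simp only [iwasawaSection, map_iwasawaUnit_upper_mul hδ hunram hb ha hd, hP b g hb a d ha hd]
    ext <;> simp only
    ring
  · simp only [iwasawaSection, map_iwasawaUnit_mul_of_inK hδ hunram g (hu.inK hn), hKn g u hu]

end PAdic

theorem statement_2 (p : ℕ) [Fact p.Prime] (k : Type*) [Field k]
    (χ₁ χ₂ : ℚ_[p]ˣ →* kˣ)
    (δ : ℚ_[p]ˣ → k) (hδ : ∀ x y : ℚ_[p]ˣ, δ (x * y) = δ x + δ y)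
    -- `δ` is unramified, i.e. trivial on `ℤ_pˣ`:
    (hunram : ∀ u : ℚ_[p]ˣ, ‖(u : ℚ_[p])‖ = 1 → δ u = 0) :
    ∃ s : (GL (Fin 2) ℚ_[p] → k) → (GL (Fin 2) ℚ_[p] → k × k),
      -- `s` maps `Ind_P^G χ` into `Ind_P^G ε_δ`:
      (∀ h, IsIndChi p χ₁ χ₂ h → IsIndEps p χ₁ χ₂ δ (s h)) ∧
      -- `pr ∘ s = id`:
      (∀ h, IsIndChi p χ₁ χ₂ h → ∀ g, (s h g).2 = h g) ∧
      -- `s` is `k`-linear: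
      (∀ h₁ h₂, IsIndChi p χ₁ χ₂ h₁ → IsIndChi p χ₁ χ₂ h₂ →
        s (h₁ + h₂) = s h₁ + s h₂) ∧
      (∀ (c : k) h, IsIndChi p χ₁ χ₂ h → s (c • h) = c • s h) ∧
      -- `s` is `K`-equivariant for the right translation action:
      (∀ u, InK p u → ∀ h, IsIndChi p χ₁ χ₂ h →
        s (fun g => h (g * u)) = fun g => s h (g * u)) := by
  refine ⟨iwasawaSection δ, fun _ => isIndEps_iwasawaSection hδ hunram, fun _ _ _ => rfl,
    fun _ _ _ _ => ?_, fun _ _ _ => ?_, fun _ hu _ _ => ?_⟩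
  · funext g
    ext <;> simp only [iwasawaSection, Pi.add_apply, Prod.fst_add, Prod.snd_add]
    ring
  · funext g
    ext <;> simp only [iwasawaSection, Pi.smul_apply, Prod.smul_fst, Prod.smul_snd, smul_eq_mul]
    ring
  · funext g
    simp only [iwasawaSection, map_iwasawaUnit_mul_of_inK hδ hunram g hu]
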